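/- Let P, Q : [0,π] → Matrix N N ℝ be continuous, let A, B be real N×N matrices, and let K be a C² matrix-valued function on the triangle {(x,y) : 0 ≤ y ≤ x ≤ π} satisfying: ∂²K/∂x²(x,y) − Q(x)·K(x,y) = ∂²K/∂y²(x,y) − K(x,y)·P(y); K(x,0)·Aᵀ + (∂K/∂y)(x,0)·Bᵀ = 0 for all x; and Q(x) = P(x) + 2·(d/dx)[K(x,x)]. Let λ ∈ ℝ, v ∈ ℝ^N, and let φ : [0,π] → ℝ^N be a C² solution of -φ'' + P·φ = λ·φ with φ(0) = Bᵀ·v and φ'(0) = −Aᵀ·v. Then ψ(x) := φ(x) + ∫₀ˣ K(x,t)·φ(t) dt satisfies -ψ''(x) + Q(x)·ψ(x) = λ·ψ(x) on [0,π], with ψ(0) = Bᵀ·v and ψ'(0) = (−Aᵀ + K(0,0)·Bᵀ)·v. -/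

import Mathlib

/-! Differentiating `ψ(x) = φ(x) + ∫₀ˣ K(x,t) φ(t) dt` twice by the Leibniz rule gives
`ψ'' = φ'' + (d/dx K(x,x)) φ + K(x,x) φ' + K_x(x,x) φ + ∫₀ˣ K_xx(x,t) φ(t) dt`.
The wave equation trades `K_xx` for `K_tt - K P + Q K`; integrating by parts twice (Lagrange's
identity) moves the `t`-derivatives onto `φ`, and `-φ'' + P φ = λ φ` absorbs the `K P` term.
The boundary term at `t = 0` vanishes by the initial data of `φ` and the boundary condition on `K`;
the one at `t = x` combines with the diagonal terms into `2 (d/dx K(x,x)) φ = (Q - P) φ`. -/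

open Matrix MeasureTheory Set Filter

attribute [local instance] Matrix.normedAddCommGroup Matrix.normedSpace

open Function intervalIntegral

section Partial

variable {E : Type*} [NormedAddCommGroup E] [NormedSpace ℝ E]

theorem hasDerivAt_diag_of_partial {f f₁ f₂ : ℝ → ℝ → E}
    (h₁ : ∀ s t, HasDerivAt (f · t) (f₁ s t) s) (h₂ : ∀ s t, HasDerivAt (f s ·) (f₂ s t) t)
    (hc₁ : Continuous (uncurry f₁)) (hc₂ : Continuous (uncurry f₂)) (x : ℝ) :
    HasDerivAt (fun s => f s s) (f₁ x x + f₂ x x) x := by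
  have hstrict := hasStrictFDerivAt_uncurry_coprod (u := (x, x))
    (f₁ := fun s t => ContinuousLinearMap.toSpanSingleton ℝ (f₁ s t))
    (f₂ := fun s t => ContinuousLinearMap.toSpanSingleton ℝ (f₂ s t))
    (.of_forall fun p => (h₁ p.1 p.2).hasFDerivAt) (.of_forall fun p => (h₂ p.1 p.2).hasFDerivAt)
    ((ContinuousLinearMap.toSpanSingletonLIE ℝ E).continuous.comp hc₁).continuousAt
    ((ContinuousLinearMap.toSpanSingletonLIE ℝ E).continuous.comp hc₂).continuousAt
  have hdiag : HasDerivAt (fun s : ℝ => (s, s)) (1, 1) x :=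
    (hasDerivAt_id x).prodMk (hasDerivAt_id x)
  have := hstrict.hasFDerivAt.comp_hasDerivAt (f := fun s : ℝ => (s, s)) x hdiag
  exact this.congr_deriv (by simp [HasUncurry.uncurry])

theorem hasDerivAt_intervalIntegral_of_partial {f f' : ℝ → ℝ → E}
    (hf : Continuous (uncurry f)) (hf' : Continuous (uncurry f'))
    (hd : ∀ s t, HasDerivAt (f · t) (f' s t) s) (a b x : ℝ) :
    HasDerivAt (fun s => ∫ t in a..b, f s t) (∫ t in a..b, f' x t) x := by
  obtain ⟨C, hC⟩ := ((isCompact_closedBall x 1).prod isCompact_uIcc).exists_bound_of_continuousOn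
    hf'.continuousOn
  refine (hasDerivAt_integral_of_dominated_loc_of_deriv_le (bound := fun _ => C)
    (Metric.closedBall_mem_nhds x one_pos)
    (.of_forall fun s => (hf.comp (continuous_const.prodMk continuous_id)).aestronglyMeasurable)
    ((hf.comp (continuous_const.prodMk continuous_id)).intervalIntegrable a b)
    (hf'.comp (continuous_const.prodMk continuous_id)).aestronglyMeasurable
    (ae_of_all _ fun t ht s hs => hC (s, t) ⟨hs, uIoc_subset_uIcc ht⟩)
    intervalIntegrable_const (ae_of_all _ fun t _ s _ => hd s t)).2

theorem hasDerivAt_intervalIntegral_diag_of_partial [CompleteSpace E] {f f' : ℝ → ℝ → E}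
    (hf : Continuous (uncurry f)) (hf' : Continuous (uncurry f'))
    (hd : ∀ s t, HasDerivAt (f · t) (f' s t) s) (a x : ℝ) :
    HasDerivAt (fun s => ∫ t in a..s, f s t) (f x x + ∫ t in a..x, f' x t) x := by
  rw [add_comm]
  exact hasDerivAt_diag_of_partial (f := fun s w => ∫ t in a..w, f s t)
    (fun s w => hasDerivAt_intervalIntegral_of_partial hf hf' hd a w s)
    (fun s w => ((hf.comp (continuous_const.prodMk continuous_id)).integral_hasStrictDerivAt
      a w).hasDerivAt)
    (continuous_parametric_primitive_of_continuous hf') hf x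

theorem hasDerivAt_partial_fst {f : ℝ → ℝ → E}
    (hf : Differentiable ℝ (uncurry f)) (s t : ℝ) :
    HasDerivAt (fun u => f u t) (deriv (fun u => f u t) s) s :=
  (hf.comp (differentiable_id.prodMk (differentiable_const t)) s).hasDerivAt

theorem hasDerivAt_partial_snd {f : ℝ → ℝ → E}
    (hf : Differentiable ℝ (uncurry f)) (s t : ℝ) :
    HasDerivAt (fun u => f s u) (deriv (fun u => f s u) t) t :=
  (hf.comp ((differentiable_const s).prodMk differentiable_id) t).hasDerivAt

theorem ContDiff.partial_fst {m n : WithTop ℕ∞} {f : ℝ → ℝ → E}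
    (hf : ContDiff ℝ n (uncurry f)) (hmn : m + 1 ≤ n) :
    ContDiff ℝ m (uncurry fun s t => deriv (fun u => f u t) s) := by
  have hdiff : Differentiable ℝ (uncurry f) := hf.differentiable (by rintro rfl; simp at hmn)
  have hfderiv : (uncurry fun s t => deriv (fun u => f u t) s)
      = fun p => fderiv ℝ (uncurry f) p (1, 0) := by
    ext ⟨s, t⟩
    exact ((hdiff (s, t)).hasFDerivAt.comp_hasDerivAt (f := fun u : ℝ => (u, t)) s
      ((hasDerivAt_id s).prodMk (hasDerivAt_const s t))).deriv
  rw [hfderiv]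
  exact (hf.fderiv_right hmn).clm_apply contDiff_const

theorem ContDiff.partial_snd {m n : WithTop ℕ∞} {f : ℝ → ℝ → E}
    (hf : ContDiff ℝ n (uncurry f)) (hmn : m + 1 ≤ n) :
    ContDiff ℝ m (uncurry fun s t => deriv (fun u => f s u) t) := by
  have hswap : ContDiff ℝ n (uncurry fun t s => f s t) := hf.comp (contDiff_snd.prodMk contDiff_fst)
  exact (hswap.partial_fst hmn).comp (contDiff_snd.prodMk contDiff_fst)

theorem ContDiff.hasDerivAt_diag {f : ℝ → ℝ → E} (hf : ContDiff ℝ 1 (uncurry f)) (x : ℝ) :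
    HasDerivAt (fun s => f s s) (deriv (fun u => f u x) x + deriv (fun u => f x u) x) x :=
  hasDerivAt_diag_of_partial
    (hasDerivAt_partial_fst (hf.differentiable one_ne_zero))
    (hasDerivAt_partial_snd (hf.differentiable one_ne_zero))
    (hf.partial_fst (m := 0) (by norm_num)).continuous
    (hf.partial_snd (m := 0) (by norm_num)).continuous x

end Partial

section MulVec

variable {m n : Type*} [Fintype m] [Fintype n]

theorem HasDerivAt.mulVec {M : ℝ → Matrix m n ℝ} {M' : Matrix m n ℝ} {w : ℝ → n → ℝ}
    {w' : n → ℝ} {x : ℝ} (hM : HasDerivAt M M' x) (hw : HasDerivAt w w' x) :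
    HasDerivAt (fun s => M s *ᵥ w s) (M' *ᵥ w x + M x *ᵥ w') x := by
  let B : Matrix m n ℝ →L[ℝ] (n → ℝ) →L[ℝ] m → ℝ :=
    (Matrix.mulVecBilin ℝ ℝ).toContinuousBilinearMap
  exact (B.hasFDerivAt.comp_hasDerivAt x hM).clm_apply hw

theorem intervalIntegral.integral_const_mulVec (M : Matrix m n ℝ) {f : ℝ → n → ℝ} {a b : ℝ}
    (hf : IntervalIntegrable f volume a b) :
    ∫ t in a..b, M *ᵥ f t = M *ᵥ ∫ t in a..b, f t :=
  (Matrix.mulVecLin M : (n → ℝ) →ₗ[ℝ] m → ℝ).toContinuousLinearMap.intervalIntegral_comp_comm hf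

theorem integral_deriv_deriv_mulVec_sub {M : ℝ → Matrix m n ℝ} {w : ℝ → n → ℝ}
    (hM : ContDiff ℝ 2 M) (hw : ContDiff ℝ 2 w) (a b : ℝ) :
    ∫ t in a..b, (deriv (deriv M) t *ᵥ w t - M t *ᵥ deriv (deriv w) t)
      = (deriv M b *ᵥ w b - M b *ᵥ deriv w b) - (deriv M a *ᵥ w a - M a *ᵥ deriv w a) := by
  have hM' : ContDiff ℝ 1 (deriv M) := hM.deriv' (n := 1)
  have hw' : ContDiff ℝ 1 (deriv w) := hw.deriv' (n := 1)
  refine integral_eq_sub_of_hasDerivAt (f := fun t => deriv M t *ᵥ w t - M t *ᵥ deriv w t)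
    (fun t _ => ?_) ?_
  · have hM₁ := (hM.differentiable two_ne_zero t).hasDerivAt
    have hM₂ := (hM'.differentiable one_ne_zero t).hasDerivAt
    have hw₁ := (hw.differentiable two_ne_zero t).hasDerivAt
    have hw₂ := (hw'.differentiable one_ne_zero t).hasDerivAt
    -- The two copies of `deriv M t *ᵥ deriv w t` differ in (defeq) instance paths on `Matrix`,
    -- so `abel` cannot cancel them; `exact` does, up to defeq.
    exact ((hM₂.mulVec hw₁).sub (hM₁.mulVec hw₂)).congr_deriv
      (by rw [sub_add_eq_sub_sub]; exact congrArg (· - _) (add_sub_cancel_right _ _))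
  · exact ((hM'.continuous_deriv le_rfl).matrix_mulVec hw.continuous |>.sub
      (hM.continuous.matrix_mulVec (hw'.continuous_deriv le_rfl))).intervalIntegrable a b

theorem hasDerivAt_integral_mulVec {K : ℝ → ℝ → Matrix m n ℝ} {φ : ℝ → n → ℝ}
    (hK : ContDiff ℝ 1 (uncurry K)) (hφ : Continuous φ) (a x : ℝ) :
    HasDerivAt (fun s => ∫ t in a..s, K s t *ᵥ φ t)
      (K x x *ᵥ φ x + ∫ t in a..x, deriv (fun u => K u t) x *ᵥ φ t) x :=
  hasDerivAt_intervalIntegral_diag_of_partial (f := fun s t => K s t *ᵥ φ t)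
    (f' := fun s t => deriv (fun u => K u t) s *ᵥ φ t)
    (hK.continuous.matrix_mulVec (hφ.comp continuous_snd))
    ((hK.partial_fst (m := 0) (by norm_num)).continuous.matrix_mulVec (hφ.comp continuous_snd))
    (fun s t => ((hasDerivAt_partial_fst (hK.differentiable one_ne_zero) s t).mulVec
      (hasDerivAt_const s (φ t))).congr_deriv (by rw [mulVec_zero, add_zero]; rfl)) a x

end MulVec

section Transform

variable {n : Type*} [Fintype n] {K : ℝ → ℝ → Matrix n n ℝ} {φ : ℝ → n → ℝ}

noncomputable def transformOp (K : ℝ → ℝ → Matrix n n ℝ) (φ : ℝ → n → ℝ) (x : ℝ) : n → ℝ :=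
  φ x + ∫ t in 0..x, K x t *ᵥ φ t

theorem deriv_transformOp (hK : ContDiff ℝ 1 (uncurry K)) (hφ : ContDiff ℝ 1 φ) :
    deriv (transformOp K φ) = fun x =>
      deriv φ x + (K x x *ᵥ φ x + ∫ t in 0..x, deriv (fun u => K u t) x *ᵥ φ t) :=
  funext fun x => ((hφ.differentiable one_ne_zero x).hasDerivAt.add
    (hasDerivAt_integral_mulVec hK hφ.continuous 0 x)).deriv

theorem hasDerivAt_deriv_transformOp (hK : ContDiff ℝ 2 (uncurry K)) (hφ : ContDiff ℝ 2 φ)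
    (x : ℝ) :
    HasDerivAt (deriv (transformOp K φ))
      (deriv (deriv φ) x
        + ((deriv (fun u => K u x) x + deriv (fun u => K x u) x) *ᵥ φ x + K x x *ᵥ deriv φ x
          + (deriv (fun u => K u x) x *ᵥ φ x
            + ∫ t in 0..x, deriv (deriv (fun u => K u t)) x *ᵥ φ t))) x := by
  have hK₁ : ContDiff ℝ 1 (uncurry K) := hK.of_le one_le_two
  have hφ' : ContDiff ℝ 1 (deriv φ) := hφ.deriv' (n := 1)
  rw [deriv_transformOp hK₁ (hφ.of_le one_le_two)]
  exact (hφ'.differentiable one_ne_zero x).hasDerivAt.add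
    (((hK₁.hasDerivAt_diag x).mulVec (hφ.differentiable two_ne_zero x).hasDerivAt).add
      (hasDerivAt_integral_mulVec (hK.partial_fst (by norm_num)) hφ.continuous 0 x))

theorem integral_deriv_deriv_fst_mulVec_of_wave {P : ℝ → Matrix n n ℝ} {Q : Matrix n n ℝ}
    {lam x : ℝ} (hK : ContDiff ℝ 2 (uncurry K)) (hφ : ContDiff ℝ 2 φ) (hx : 0 ≤ x)
    (hwave : ∀ t ∈ Icc 0 x, deriv (deriv (fun s => K s t)) x - Q * K x t
      = deriv (deriv (fun u => K x u)) t - K x t * P t)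
    (hφeq : ∀ t ∈ Icc 0 x, -(deriv (deriv φ) t) + P t *ᵥ φ t = lam • φ t) :
    ∫ t in 0..x, deriv (deriv (fun s => K s t)) x *ᵥ φ t
      = (deriv (fun u => K x u) x *ᵥ φ x - K x x *ᵥ deriv φ x)
        - (deriv (fun u => K x u) 0 *ᵥ φ 0 - K x 0 *ᵥ deriv φ 0)
        - lam • (∫ t in 0..x, K x t *ᵥ φ t) + Q *ᵥ ∫ t in 0..x, K x t *ᵥ φ t := by
  have hKx : ContDiff ℝ 2 (fun u => K x u) := hK.comp (contDiff_const.prodMk contDiff_id)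
  have hpointwise : EqOn (fun t => deriv (deriv (fun s => K s t)) x *ᵥ φ t)
      (fun t => (deriv (deriv (fun u => K x u)) t *ᵥ φ t - K x t *ᵥ deriv (deriv φ) t)
        - lam • (K x t *ᵥ φ t) + Q *ᵥ (K x t *ᵥ φ t)) (uIcc 0 x) := by
    intro t ht
    rw [uIcc_of_le hx] at ht
    dsimp only
    have hPφ : P t *ᵥ φ t = lam • φ t + deriv (deriv φ) t := by
      rw [← hφeq t ht]; abel
    rw [eq_add_of_sub_eq (hwave t ht), add_mulVec, sub_mulVec, ← mulVec_mulVec, ← mulVec_mulVec,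
      hPφ, mulVec_add, mulVec_smul]
    abel
  have hKφ : Continuous fun t => K x t *ᵥ φ t := hKx.continuous.matrix_mulVec hφ.continuous
  have hlagrange : IntervalIntegrable (fun t =>
      deriv (deriv (fun u => K x u)) t *ᵥ φ t - K x t *ᵥ deriv (deriv φ) t) volume 0 x :=
    (((hKx.deriv' (n := 1)).continuous_deriv le_rfl).matrix_mulVec hφ.continuous |>.sub
      (hKx.continuous.matrix_mulVec ((hφ.deriv' (n := 1)).continuous_deriv le_rfl))
      ).intervalIntegrable _ _
  have hsmul : IntervalIntegrable (fun t => lam • (K x t *ᵥ φ t)) volume 0 x :=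
    (hKφ.const_smul lam).intervalIntegrable _ _
  have hQ : IntervalIntegrable (fun t => Q *ᵥ (K x t *ᵥ φ t)) volume 0 x :=
    (continuous_const.matrix_mulVec hKφ).intervalIntegrable _ _
  rw [intervalIntegral.integral_congr hpointwise,
    intervalIntegral.integral_add (hlagrange.sub hsmul) hQ,
    intervalIntegral.integral_sub hlagrange hsmul, intervalIntegral.integral_smul,
    integral_const_mulVec _ (hKφ.intervalIntegrable _ _),
    integral_deriv_deriv_mulVec_sub hKx hφ]

theorem transformOp_eigen_of_wave {P : ℝ → Matrix n n ℝ} {Q : Matrix n n ℝ} {lam x : ℝ}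
    (hK : ContDiff ℝ 2 (uncurry K)) (hφ : ContDiff ℝ 2 φ) (hx : 0 ≤ x)
    (hwave : ∀ t ∈ Icc 0 x, deriv (deriv (fun s => K s t)) x - Q * K x t
      = deriv (deriv (fun u => K x u)) t - K x t * P t)
    (hφeq : ∀ t ∈ Icc 0 x, -(deriv (deriv φ) t) + P t *ᵥ φ t = lam • φ t)
    (hbc : deriv (fun u => K x u) 0 *ᵥ φ 0 - K x 0 *ᵥ deriv φ 0 = 0)
    (hQ : Q = P x + (2 : ℝ) • deriv (fun s => K s s) x) :
    -(deriv (deriv (transformOp K φ)) x) + Q *ᵥ transformOp K φ x = lam • transformOp K φ x := by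
  have hPφ : P x *ᵥ φ x = lam • φ x + deriv (deriv φ) x := by
    rw [← hφeq x ⟨hx, le_rfl⟩]; abel
  have hdiag : deriv (fun s => K s s) x = deriv (fun u => K u x) x + deriv (fun u => K x u) x :=
    ((hK.of_le one_le_two).hasDerivAt_diag x).deriv
  rw [(hasDerivAt_deriv_transformOp hK hφ x).deriv,
    integral_deriv_deriv_fst_mulVec_of_wave hK hφ hx hwave hφeq, hbc, hQ, hdiag, transformOp]
  simp only [add_mulVec, mulVec_add, two_smul, sub_zero, hPφ, smul_add]
  abel

end Transform

theorem transformed_solution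
    (N : ℕ)
    (P Q : ℝ → Matrix (Fin N) (Fin N) ℝ) (A B : Matrix (Fin N) (Fin N) ℝ)
    (K : ℝ → ℝ → Matrix (Fin N) (Fin N) ℝ)
    (hKC : ContDiff ℝ 2 (Function.uncurry K))
    (hKwave : ∀ x y : ℝ, 0 ≤ y → y ≤ x → x ≤ Real.pi →
      deriv (deriv (fun s => K s y)) x - Q x * K x y
        = deriv (deriv (fun t => K x t)) y - K x y * P y)
    (hKbc : ∀ x ∈ Set.Icc (0:ℝ) Real.pi,
      K x 0 * Aᵀ + deriv (fun t => K x t) 0 * Bᵀ = 0)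
    (hQdef : ∀ x ∈ Set.Icc (0:ℝ) Real.pi,
      Q x = P x + (2:ℝ) • deriv (fun s => K s s) x)
    (lam : ℝ) (v : Fin N → ℝ) (φ : ℝ → Fin N → ℝ)
    (hφC : ContDiff ℝ 2 φ)
    (hφeq : ∀ x ∈ Set.Icc (0:ℝ) Real.pi,
      -(deriv (deriv φ) x) + P x *ᵥ φ x = lam • φ x)
    (hφ0 : φ 0 = Bᵀ *ᵥ v) (hφ0' : deriv φ 0 = -Aᵀ *ᵥ v)
    (ψ : ℝ → Fin N → ℝ)
    (hψ : ∀ x : ℝ, ψ x = φ x + ∫ t in (0:ℝ)..x, K x t *ᵥ φ t) :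
    (∀ x ∈ Set.Icc (0:ℝ) Real.pi,
      -(deriv (deriv ψ) x) + Q x *ᵥ ψ x = lam • ψ x) ∧
    ψ 0 = Bᵀ *ᵥ v ∧
    deriv ψ 0 = (-Aᵀ + K 0 0 * Bᵀ) *ᵥ v := by
  obtain rfl : ψ = transformOp K φ := funext hψ
  refine ⟨fun x hx => ?_, by simp [transformOp, hφ0], ?_⟩
  · refine transformOp_eigen_of_wave hKC hφC hx.1 (fun t ht => hKwave x t ht.1 ht.2 hx.2)
      (fun t ht => hφeq t ⟨ht.1, ht.2.trans hx.2⟩) ?_ (hQdef x hx)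
    rw [hφ0, hφ0', mulVec_mulVec, mulVec_mulVec, mul_neg, neg_mulVec, sub_neg_eq_add, ← add_mulVec,
      add_comm, hKbc x hx, zero_mulVec]
  · rw [deriv_transformOp (hKC.of_le one_le_two) (hφC.of_le one_le_two)]
    simp [hφ0, hφ0', add_mulVec, mulVec_mulVec]
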